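/- arXiv:1508.02101 — 2 statements merged into one kernel-verified Lean document; each statement's English description precedes it below -/
import Mathlib

section
/- Every factor of the Thue–Morse word t of odd length n is a factor of h(v') for some factor v' of t of length (n+1)/2, where h is the Thue–Morse morphism h(0)=01, h(1)=10. -/
/-!
A factor `v` of odd length `n` starting at position `i` lies inside the block of `t` of length
`n + 1` starting at the even position `2 ⌊i/2⌋`. Since `t = h(t)`, i.e. `t(2k) t(2k+1) = h(t(k))`,
that block is the image under `h` of the factor of `t` of length `(n+1)/2` starting at `⌊i/2⌋`.
-/

def IsFactor {α : Type*} (u : List α) (w : ℕ → α) : Prop :=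
  ∃ i, u = (List.range u.length).map fun j => w (i + j)

def tm : ℕ → Fin 2 := fun n => if (Nat.digits 2 n).sum % 2 = 0 then 0 else 1

/-- The Thue–Morse morphism `h(0) = 01`, `h(1) = 10`. -/
def tmMorph : Fin 2 → List (Fin 2) := fun a => if a = 0 then [0, 1] else [1, 0]

def factorAt {α : Type*} (w : ℕ → α) (i m : ℕ) : List α :=
  (List.range m).map fun j => w (i + j)

theorem isFactor_iff_exists_factorAt {α : Type*} {u : List α} {w : ℕ → α} :
    IsFactor u w ↔ ∃ i, u = factorAt w i u.length :=
  Iff.rfl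

theorem isFactor_factorAt {α : Type*} (w : ℕ → α) (i m : ℕ) : IsFactor (factorAt w i m) w :=
  ⟨i, by simp [factorAt]⟩

@[simp]
theorem length_factorAt {α : Type*} (w : ℕ → α) (i m : ℕ) : (factorAt w i m).length = m := by
  simp [factorAt]

theorem factorAt_add {α : Type*} (w : ℕ → α) (i m l : ℕ) :
    factorAt w i (m + l) = factorAt w i m ++ factorAt w (i + m) l := by
  simp only [factorAt, List.range_add, List.map_append, List.map_map, Function.comp_def,
    Nat.add_assoc]

theorem factorAt_infix_factorAt {α : Type*} (w : ℕ → α) {i k m l : ℕ} (hki : k ≤ i)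
    (hl : i + m ≤ k + l) : factorAt w i m <:+: factorAt w k l := by
  obtain ⟨r, rfl⟩ : ∃ r, l = (i - k) + m + r := ⟨k + l - (i + m), by omega⟩
  rw [factorAt_add, factorAt_add, Nat.add_sub_cancel' hki]
  exact List.infix_append _ _ _

theorem tm_two_mul (n : ℕ) : tm (2 * n) = tm n := by
  rcases Nat.eq_zero_or_pos n with rfl | hn
  · rfl
  · unfold tm
    rw [Nat.digits_def' (by norm_num) (by omega)]
    simp

theorem tm_two_mul_add_one (n : ℕ) : tm (2 * n + 1) = 1 - tm n := by
  unfold tm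
  rw [Nat.digits_def' (by norm_num) (by omega),
    show (2 * n + 1) % 2 = 1 by omega, show (2 * n + 1) / 2 = n by omega]
  rcases Nat.mod_two_eq_zero_or_one (Nat.digits 2 n).sum with h | h <;> simp [h, Nat.add_mod]

theorem tmMorph_tm (n : ℕ) : tmMorph (tm n) = [tm (2 * n), tm (2 * n + 1)] := by
  rw [tm_two_mul, tm_two_mul_add_one]
  generalize tm n = a
  fin_cases a <;> rfl

theorem flatMap_tmMorph_factorAt_tm (i m : ℕ) :
    (factorAt tm i m).flatMap tmMorph = factorAt tm (2 * i) (2 * m) := by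
  induction m with
  | zero => rfl
  | succ m ih =>
    rw [factorAt_add, List.flatMap_append, ih, Nat.mul_succ, factorAt_add]
    simp [factorAt, tmMorph_tm, List.range_succ, Nat.mul_add, Nat.add_assoc]

/-- Every factor of the Thue–Morse word of odd length `n` is a factor of `h(v')`
for some factor `v'` of `t` of length `(n+1)/2`. -/
theorem stmt13 (v : List (Fin 2)) (hv : IsFactor v tm) (hodd : v.length % 2 = 1) :
    ∃ v' : List (Fin 2), IsFactor v' tm ∧ v'.length = (v.length + 1) / 2 ∧
      v <:+: v'.flatMap tmMorph := by
  obtain ⟨i, hi⟩ := isFactor_iff_exists_factorAt.mp hv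
  refine ⟨factorAt tm (i / 2) ((v.length + 1) / 2), isFactor_factorAt _ _ _,
    length_factorAt _ _ _, ?_⟩
  rw [flatMap_tmMorph_factorAt_tm]
  nth_rw 1 [hi]
  exact factorAt_infix_factorAt tm (by omega) (by omega)
end

section
/- Let f4 be the binary morphism with f4(0)=0, f4(1)=1000010011, and w4 = f4(t) where t is the Thue–Morse word. If p·y is a prefix of w4 and y = f4(s) for some factor s of t containing at least one 1, then p = f4(τ) for some prefix τ of t. -/
def tmPrefix (n : ℕ) : List (Fin 2) := (List.range n).map tm

def f4 : Fin 2 → List (Fin 2) :=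
  fun a => if a = 0 then [0] else [1, 0, 0, 0, 0, 1, 0, 0, 1, 1]

def IsPrefT (u : List (Fin 2)) : Prop := u = tmPrefix u.length

def IsPrefW4 (p : List (Fin 2)) : Prop := ∃ n, p <+: (tmPrefix n).flatMap f4

/-! In `f4(t)` the factor `1000` occurs only at the start of a block `f4(1) = 1000010011`:
inside `f4(1)` it occurs only at position 0, and an occurrence starting at the last letter of
`f4(1)` would have to be followed by three blocks `f4(0) = 0`, i.e. by `000` in `t`, which the
Thue–Morse word avoids because `t(2n) ≠ t(2n+1)`. Writing `s = u · 1 · v`, the word `p · f4(u)`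
is therefore `f4` of a prefix of `t`. Since the last letter of `f4(a)` is `a`, the blocks of
`f4(u)` can then be peeled off from the right, leaving `p = f4(t[0, m))`. -/

open List

lemma tm_two_mul_add_one_ne (n : ℕ) : tm (2 * n + 1) ≠ tm (2 * n) := by
  have hodd : (Nat.digits 2 (2 * n + 1)).sum = (Nat.digits 2 n).sum + 1 := by
    rw [add_comm, Nat.digits_add 2 one_lt_two 1 n one_lt_two (Or.inl one_ne_zero), sum_cons,
      add_comm]
  have heven : (Nat.digits 2 (2 * n)).sum = (Nat.digits 2 n).sum := by
    rcases n.eq_zero_or_pos with rfl | hn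
    · rfl
    · rw [← zero_add (2 * n), Nat.digits_add 2 one_lt_two 0 n two_pos (Or.inr hn.ne'), sum_cons,
        zero_add]
  unfold tm
  rw [hodd, heven]
  split_ifs <;> first | decide | omega

lemma not_tm_zero_zero_zero (k : ℕ) : ¬(tm k = 0 ∧ tm (k + 1) = 0 ∧ tm (k + 2) = 0) := by
  rintro ⟨h0, h1, h2⟩
  obtain ⟨m, rfl | rfl⟩ := Nat.even_or_odd' k
  · exact tm_two_mul_add_one_ne m (h1.trans h0.symm)
  · exact tm_two_mul_add_one_ne (m + 1) (h2.trans h1.symm)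

lemma tmPrefix_succ (n : ℕ) : tmPrefix (n + 1) = tmPrefix n ++ [tm n] := by
  simp [tmPrefix, range_succ]

lemma f4_ne_nil (a : Fin 2) : f4 a ≠ [] := by
  unfold f4; split_ifs <;> simp

lemma getLast?_f4 (a : Fin 2) : (f4 a).getLast? = some a := by
  fin_cases a <;> rfl

def w4Prefix (n : ℕ) : List (Fin 2) := (tmPrefix n).flatMap f4

lemma w4Prefix_zero : w4Prefix 0 = [] := rfl

lemma w4Prefix_succ (n : ℕ) : w4Prefix (n + 1) = w4Prefix n ++ f4 (tm n) := by
  simp [w4Prefix, tmPrefix_succ]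

lemma w4Prefix_prefix_of_le {m n : ℕ} (h : m ≤ n) : w4Prefix m <+: w4Prefix n := by
  induction n, h using Nat.le_induction with
  | base => exact prefix_rfl
  | succ n _ ih => exact ih.trans (w4Prefix_succ n ▸ prefix_append _ _)

lemma strictMono_length_w4Prefix : StrictMono fun n => (w4Prefix n).length :=
  strictMono_nat_of_lt_succ fun n => by simp [w4Prefix_succ, length_pos_iff.2 (f4_ne_nil _)]

lemma exists_w4Prefix_append_take_of_prefix {x : List (Fin 2)} {n : ℕ} (h : x <+: w4Prefix n) :
    ∃ k, ∃ j < (f4 (tm k)).length, x = w4Prefix k ++ (f4 (tm k)).take j := by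
  induction n with
  | zero =>
    refine ⟨0, 0, length_pos_iff.2 (f4_ne_nil _), ?_⟩
    simpa [w4Prefix_zero] using h
  | succ n ih =>
    rcases prefix_or_prefix_of_prefix h (w4Prefix_prefix_of_le n.le_succ) with hx | ⟨d, rfl⟩
    · exact ih hx
    rw [w4Prefix_succ, prefix_append_right_inj] at h
    rcases h.length_le.lt_or_eq with hlt | hlen
    · exact ⟨n, d.length, hlt, by rw [← prefix_iff_eq_take.1 h]⟩
    · refine ⟨n + 1, 0, length_pos_iff.2 (f4_ne_nil _), ?_⟩
      rw [h.eq_of_length hlen, w4Prefix_succ, take_zero, append_nil]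

lemma exists_w4Prefix_succ_append_of_append_eq {k n : ℕ} {r : List (Fin 2)}
    (h : w4Prefix k ++ r = w4Prefix n) (hr : r ≠ []) :
    ∃ r', r = f4 (tm k) ++ r' ∧ w4Prefix (k + 1) ++ r' = w4Prefix n := by
  have hkn : k < n := strictMono_length_w4Prefix.lt_iff_lt.1 <| by
    simp only [← h, length_append, Nat.lt_add_right_iff_pos, length_pos_iff, ne_eq, hr,
      not_false_eq_true]
  obtain ⟨r', hr'⟩ := w4Prefix_prefix_of_le hkn
  refine ⟨r', ?_, hr'⟩
  rw [w4Prefix_succ, append_assoc, ← h] at hr'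
  exact (append_cancel_left hr').symm

lemma tm_eq_zero_of_w4Prefix_append_zero_cons {k n : ℕ} {r : List (Fin 2)}
    (h : w4Prefix k ++ 0 :: r = w4Prefix n) : tm k = 0 ∧ w4Prefix (k + 1) ++ r = w4Prefix n := by
  obtain ⟨r', hr, hn⟩ := exists_w4Prefix_succ_append_of_append_eq h (cons_ne_nil _ _)
  generalize tm k = a at hr hn ⊢
  fin_cases a
  · simp_all [f4]
  · simp [f4] at hr

lemma eq_zero_or_of_take_f4_append_one_zero_zero_zero {a : Fin 2} {j : ℕ} {z r : List (Fin 2)}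
    (hj : j < (f4 a).length) (h : (f4 a).take j ++ 1 :: 0 :: 0 :: 0 :: z = f4 a ++ r) :
    j = 0 ∨ r = 0 :: 0 :: 0 :: z := by
  match a with
  | 0 => exact .inl (Nat.lt_one_iff.1 hj)
  | 1 =>
    replace hj : j < 10 := hj
    interval_cases j <;> simp_all [f4]

lemma exists_w4Prefix_eq_of_append_one_zero_zero_zero {x z : List (Fin 2)} {n : ℕ}
    (h : x ++ 1 :: 0 :: 0 :: 0 :: z = w4Prefix n) : ∃ k, x = w4Prefix k := by
  obtain ⟨k, j, hj, rfl⟩ := exists_w4Prefix_append_take_of_prefix ⟨_, h⟩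
  rw [append_assoc] at h
  obtain ⟨r, hr, hn⟩ := exists_w4Prefix_succ_append_of_append_eq h (by simp)
  rcases eq_zero_or_of_take_f4_append_one_zero_zero_zero hj hr with rfl | rfl
  · exact ⟨k, by rw [take_zero, append_nil]⟩
  · obtain ⟨h1, hn⟩ := tm_eq_zero_of_w4Prefix_append_zero_cons hn
    obtain ⟨h2, hn⟩ := tm_eq_zero_of_w4Prefix_append_zero_cons hn
    obtain ⟨h3, -⟩ := tm_eq_zero_of_w4Prefix_append_zero_cons hn
    exact absurd ⟨h1, h2, h3⟩ (not_tm_zero_zero_zero (k + 1))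

lemma exists_w4Prefix_eq_of_append_flatMap_eq {p u : List (Fin 2)} {k : ℕ}
    (h : p ++ u.flatMap f4 = w4Prefix k) : ∃ m, p = w4Prefix m := by
  induction u using List.reverseRecOn generalizing k with
  | nil => exact ⟨k, by simpa using h⟩
  | append_singleton u a ih =>
    cases k with
    | zero => simp [w4Prefix_zero, f4_ne_nil] at h
    | succ k =>
      rw [w4Prefix_succ, flatMap_append, flatMap_singleton, ← append_assoc] at h
      have ha : a = tm k := by simpa [getLast?_append, getLast?_f4] using congrArg getLast? h
      subst ha
      exact ih (append_cancel_right h)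

theorem stmt17_general (p y s : List (Fin 2)) (hpy : IsPrefW4 (p ++ y))
    (hy : y = s.flatMap f4) (h1 : 0 < s.count 1) :
    ∃ τ : List (Fin 2), IsPrefT τ ∧ p = τ.flatMap f4 := by
  obtain ⟨u, v, rfl⟩ := append_of_mem (count_pos_iff.mp h1)
  obtain ⟨N, r, hr⟩ := hpy
  obtain ⟨k, hk⟩ := exists_w4Prefix_eq_of_append_one_zero_zero_zero (x := p ++ u.flatMap f4)
    (z := 0 :: 1 :: 0 :: 0 :: 1 :: 1 :: (v.flatMap f4 ++ r))
    (by rw [w4Prefix, ← hr, hy]; simp [f4])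
  obtain ⟨m, rfl⟩ := exists_w4Prefix_eq_of_append_flatMap_eq hk
  exact ⟨tmPrefix m, by simp [IsPrefT, tmPrefix], rfl⟩

/-- If `p · y` is a prefix of `w4 = f4(t)` with `y = f4(s)` for a factor `s` of `t`
containing at least one `1`, then `p = f4(τ)` for some prefix `τ` of `t`. -/
theorem stmt17 (p y s : List (Fin 2)) (hpy : IsPrefW4 (p ++ y))
    (hs : IsFactor s tm) (hy : y = s.flatMap f4) (h1 : 0 < s.count 1) :
    ∃ τ : List (Fin 2), IsPrefT τ ∧ p = τ.flatMap f4 :=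
  stmt17_general p y s hpy hy h1
end
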